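/- arXiv:1110.6710 — 5 statements merged into one kernel-verified Lean document; each statement's English description precedes it below -/
import Mathlib

section
/- Let A, B be integers, f(t) = t^3 + At + B, and F(t) = t^4 + 2At^2 + 4Bt. If α₁, α₂, α₃ are the roots of f, then F(α₁)F(α₂)F(α₃) = -B²(2A³ + 27B²). -/
/-!
On a root `α` of `f`, the relation `α ^ 3 = -A α - B` reduces `F(α)` to `α (A α + 3 B)`.
The product of the `F(αᵢ)` is therefore `e₃ · ∏ (A αᵢ + 3 B)`, and expanding the last product in
the elementary symmetric functions gives `-A³ B + 3 A³ B + 27 B³ = B (2 A³ + 27 B²)`.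
-/

section Vieta

variable {R : Type*} [CommRing R] {a b x y z : R}

theorem cube_add_mul_add_eq_zero_of_vieta (h1 : x + y + z = 0)
    (h2 : x * y + y * z + z * x = a) (h3 : x * y * z = -b) :
    x ^ 3 + a * x + b = 0 ∧ y ^ 3 + a * y + b = 0 ∧ z ^ 3 + a * z + b = 0 :=
  ⟨by linear_combination x ^ 2 * h1 - x * h2 + h3,
    by linear_combination y ^ 2 * h1 - y * h2 + h3,
    by linear_combination z ^ 2 * h1 - z * h2 + h3⟩

theorem quartic_eq_mul_of_cube_add_mul_add_eq_zero (h : x ^ 3 + a * x + b = 0) :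
    x ^ 4 + 2 * a * x ^ 2 + 4 * b * x = x * (a * x + 3 * b) := by
  linear_combination x * h

theorem prod_mul_add_three_mul_of_vieta (h1 : x + y + z = 0)
    (h2 : x * y + y * z + z * x = a) (h3 : x * y * z = -b) :
    (a * x + 3 * b) * (a * y + 3 * b) * (a * z + 3 * b) = b * (2 * a ^ 3 + 27 * b ^ 2) := by
  linear_combination a ^ 3 * h3 + 3 * a ^ 2 * b * h2 + 9 * a * b ^ 2 * h1

end Vieta

theorem prod_F_roots (K : Type*) [CommRing K] (A B : ℤ) (α₁ α₂ α₃ : K)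
    (h1 : α₁ + α₂ + α₃ = 0)
    (h2 : α₁ * α₂ + α₂ * α₃ + α₃ * α₁ = (A : K))
    (h3 : α₁ * α₂ * α₃ = -(B : K)) :
    (α₁ ^ 4 + 2 * (A : K) * α₁ ^ 2 + 4 * (B : K) * α₁) *
    (α₂ ^ 4 + 2 * (A : K) * α₂ ^ 2 + 4 * (B : K) * α₂) *
    (α₃ ^ 4 + 2 * (A : K) * α₃ ^ 2 + 4 * (B : K) * α₃) =
    -(B : K) ^ 2 * (2 * (A : K) ^ 3 + 27 * (B : K) ^ 2) := by
  obtain ⟨root₁, root₂, root₃⟩ := cube_add_mul_add_eq_zero_of_vieta h1 h2 h3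
  rw [quartic_eq_mul_of_cube_add_mul_add_eq_zero root₁,
    quartic_eq_mul_of_cube_add_mul_add_eq_zero root₂,
    quartic_eq_mul_of_cube_add_mul_add_eq_zero root₃]
  calc _ = α₁ * α₂ * α₃ *
        (((A : K) * α₁ + 3 * B) * ((A : K) * α₂ + 3 * B) * ((A : K) * α₃ + 3 * B)) := by ring
    _ = -(B : K) ^ 2 * (2 * (A : K) ^ 3 + 27 * (B : K) ^ 2) := by
      rw [h3, prod_mul_add_three_mul_of_vieta h1 h2 h3]
      ring
end

section
/- Let A, B be integers, f(t) = t³ + At + B, F(t) = t⁴ + 2At² + 4Bt, f₁(t) = t³ + 2A²t² + A(A³ + 18B²)t + B²(2A³ + 27B²), and D(t) = t⁶ + 4At⁴ + 10Bt³ + 5A²t² + 18ABt + 2A³ + 27B². Then as polynomials, f₁(F(t)) = D(t)·f(t)². -/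
open Polynomial

theorem f1_comp_F_eq (A B : ℤ) :
    (X ^ 3 + C (2 * A ^ 2) * X ^ 2 + C (A * (A ^ 3 + 18 * B ^ 2)) * X
        + C (B ^ 2 * (2 * A ^ 3 + 27 * B ^ 2))).comp
      (X ^ 4 + C (2 * A) * X ^ 2 + C (4 * B) * X) =
    (X ^ 6 + C (4 * A) * X ^ 4 + C (10 * B) * X ^ 3 + C (5 * A ^ 2) * X ^ 2
        + C (18 * A * B) * X + C (2 * A ^ 3 + 27 * B ^ 2)) *
      (X ^ 3 + C A * X + C B) ^ 2 := by
  simp only [add_comp, mul_comp, pow_comp, X_comp, C_comp, map_mul, map_add, map_pow,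
    map_ofNat, ofNat_comp]
  ring
end

section
/- Let A, B be integers and f₁(t) = t³ + 2A²t² + A(A³ + 18B²)t + B²(2A³ + 27B²). Then the discriminant of f₁ equals B² · (disc(f))³, where f(t) = t³ + At + B has discriminant disc(f) = -4A³ - 27B². Equivalently, disc(f₁) = B²·(-4A³ - 27B²)³. -/
theorem disc_f1 (A B : ℤ) :
    let p := 2 * A ^ 2
    let q := A * (A ^ 3 + 18 * B ^ 2)
    let r := B ^ 2 * (2 * A ^ 3 + 27 * B ^ 2)
    p ^ 2 * q ^ 2 - 4 * q ^ 3 - 4 * p ^ 3 * r + 18 * p * q * r - 27 * r ^ 2 =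
      B ^ 2 * (-4 * A ^ 3 - 27 * B ^ 2) ^ 3 := by
  intro p q r
  ring
end

section
/- For every real number t, (t⁴ + 2t² + 12t + 30)³ < 3.37933³ · (t⁶ + 4t⁴ + 30t³ + 5t² + 54t + 245)². -/
/-!
With `P` the quartic and `D` the sextic, `3.37933` is the maximum `≈ 3.3793204` of
`P / D ^ (2/3)` (attained near `t = -2.2947`) rounded up, so the gap `Q = 3.37933³ D² - P³`
dips to about `0.57` while its coefficients reach `2 · 10⁶`: positivity needs an exact
certificate. Let `W = (1/10) ∑_{k ≤ 6} (t / 2.4) ^ (2k)`. Since `Q - W` is still positive, it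
equals `|F t|²` for the sextic `F = √λ ∏ (t - z)`, the product running over its complex roots `z`
with `Im z > 0` and `λ` being its leading coefficient (so `Im F` has degree 5, and `Re F` has no
`t⁵` term because `Q` has no `t¹¹` term). Rounding the real and imaginary parts of `F` to ten
significant digits costs less than `W`, so `Q - (Re F)² - (Im F)²` has positive even
coefficients that dominate the odd ones.
-/

def spectralFactorRe (t : ℝ) : ℝ :=
  6.131191627 * t ^ 6 - 283.2692791 * t ^ 4 - 399.4453506 * t ^ 3 + 1348.01828 * t ^ 2
    + 1894.030614 * t - 619.3125225

def spectralFactorIm (t : ℝ) : ℝ :=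
  -61.45151387 * t ^ 5 - 58.40086221 * t ^ 4 + 807.7968831 * t ^ 3 + 1154.476088 * t ^ 2
    - 1207.755842 * t - 1380.546087

theorem spectralFactor_sq_add_sq_lt (t : ℝ) :
    spectralFactorRe t ^ 2 + spectralFactorIm t ^ 2 <
      (3.37933 : ℝ) ^ 3 * (t ^ 6 + 4 * t ^ 4 + 30 * t ^ 3 + 5 * t ^ 2 + 54 * t + 245) ^ 2
        - (t ^ 4 + 2 * t ^ 2 + 12 * t + 30) ^ 3 := by
  unfold spectralFactorRe spectralFactorIm
  -- each odd monomial is absorbed by `(t ^ k ± t ^ (k + 1)) ^ 2 ≥ 0`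
  linarith [sq_nonneg (1 - t), sq_nonneg (t + t ^ 2), sq_nonneg (t ^ 2 + t ^ 3),
    sq_nonneg (t ^ 3 + t ^ 4), sq_nonneg (t ^ 4 + t ^ 5), sq_nonneg t, sq_nonneg (t ^ 2),
    sq_nonneg (t ^ 3), sq_nonneg (t ^ 4), sq_nonneg (t ^ 5), sq_nonneg (t ^ 6)]

theorem quartic_cubed_bound (t : ℝ) :
    (t ^ 4 + 2 * t ^ 2 + 12 * t + 30) ^ 3 <
      (3.37933 : ℝ) ^ 3 *
        (t ^ 6 + 4 * t ^ 4 + 30 * t ^ 3 + 5 * t ^ 2 + 54 * t + 245) ^ 2 := by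
  linarith [spectralFactor_sq_add_sq_lt t, sq_nonneg (spectralFactorRe t),
    sq_nonneg (spectralFactorIm t)]
end

section
/- For the polynomials f(t) = t³ + t + 3, F(t) = t⁴ + 2t² + 12t, f₁(x) = x³ + 2x² + 163x + 2205, and D(t) = t⁶ + 4t⁴ + 30t³ + 5t² + 54t + 245, the identity f₁(F(t)) = D(t)·f(t)² holds in ℤ[t]. Consequently, for every integer t, the point (F(t), f(t)) lies on the curve D(t)·y² = f₁(x), equivalently (D(t)·F(t), D(t)²·f(t)) lies on y² = x³ + 2D(t)x² + 163D(t)²x + 2205D(t)³. -/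
open Polynomial

theorem quadratic_twist_point_scale {R : Type*} [CommRing R] {a b c d x y : R}
    (h : d * y ^ 2 = x ^ 3 + a * x ^ 2 + b * x + c) :
    (d ^ 2 * y) ^ 2 = (d * x) ^ 3 + a * d * (d * x) ^ 2 + b * d ^ 2 * (d * x) + c * d ^ 3 := by
  linear_combination d ^ 3 * h

theorem twist_family_example :
    ((X ^ 3 + C 2 * X ^ 2 + C 163 * X + C 2205 : ℤ[X]).comp
        (X ^ 4 + C 2 * X ^ 2 + C 12 * X) =
      (X ^ 6 + C 4 * X ^ 4 + C 30 * X ^ 3 + C 5 * X ^ 2 + C 54 * X + C 245) *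
        (X ^ 3 + X + C 3) ^ 2)
    ∧ (∀ t : ℤ,
        let D := t ^ 6 + 4 * t ^ 4 + 30 * t ^ 3 + 5 * t ^ 2 + 54 * t + 245
        let F := t ^ 4 + 2 * t ^ 2 + 12 * t
        let f := t ^ 3 + t + 3
        D * f ^ 2 = F ^ 3 + 2 * F ^ 2 + 163 * F + 2205 ∧
        (D ^ 2 * f) ^ 2 = (D * F) ^ 3 + 2 * D * (D * F) ^ 2
          + 163 * D ^ 2 * (D * F) + 2205 * D ^ 3) := by
  have hcomp : (X ^ 3 + C 2 * X ^ 2 + C 163 * X + C 2205 : ℤ[X]).comp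
      (X ^ 4 + C 2 * X ^ 2 + C 12 * X) =
      (X ^ 6 + C 4 * X ^ 4 + C 30 * X ^ 3 + C 5 * X ^ 2 + C 54 * X + C 245) *
        (X ^ 3 + X + C 3) ^ 2 := by
    simp only [add_comp, mul_comp, pow_comp, X_comp, map_ofNat, ofNat_comp]
    ring
  refine ⟨hcomp, fun t => ?_⟩
  have hpoint : (t ^ 6 + 4 * t ^ 4 + 30 * t ^ 3 + 5 * t ^ 2 + 54 * t + 245) * (t ^ 3 + t + 3) ^ 2
      = (t ^ 4 + 2 * t ^ 2 + 12 * t) ^ 3 + 2 * (t ^ 4 + 2 * t ^ 2 + 12 * t) ^ 2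
        + 163 * (t ^ 4 + 2 * t ^ 2 + 12 * t) + 2205 := by
    simpa using congrArg (eval t) hcomp.symm
  exact ⟨hpoint, quadratic_twist_point_scale hpoint⟩
end
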